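/- If X and Y are real positive semidefinite symmetric matrices of the same size, then tr((XY)^n) ≥ 0 for every positive integer n. -/

import Mathlib

/-!
Writing `X = Bᴴ * B`, cyclicity of the trace turns `tr ((X * Y) ^ n)` into `tr ((B * Y * Bᴴ) ^ n)`,
the trace of a power of a positive semidefinite matrix.
-/

open Matrix
open scoped MatrixOrder ComplexOrder

theorem Matrix.trace_pow_mul_comm {n R : Type*} [Fintype n] [DecidableEq n] [CommSemiring R]
    (A B : Matrix n n R) : ∀ k : ℕ, ((A * B) ^ k).trace = ((B * A) ^ k).trace
  | 0 => by simp
  | k + 1 => by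
    rw [pow_succ, ← mul_assoc, mul_pow_mul, mul_assoc, trace_mul_comm, mul_assoc, ← pow_succ]

theorem Matrix.PosSemidef.trace_pow_mul_nonneg {𝕜 n : Type*} [RCLike 𝕜] [Fintype n]
    [DecidableEq n] {X Y : Matrix n n 𝕜} (hX : X.PosSemidef) (hY : Y.PosSemidef) (k : ℕ) :
    0 ≤ ((X * Y) ^ k).trace := by
  obtain ⟨B, rfl⟩ := CStarAlgebra.nonneg_iff_eq_star_mul_self.mp hX.nonneg
  rw [mul_assoc, trace_pow_mul_comm]
  exact ((hY.mul_mul_conjTranspose_same B).pow k).trace_nonneg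

theorem trace_pow_mul_nonneg (m : ℕ) (X Y : Matrix (Fin m) (Fin m) ℝ)
    (hX : X.PosSemidef) (hY : Y.PosSemidef) (n : ℕ) :
    0 ≤ ((X * Y) ^ n).trace :=
  hX.trace_pow_mul_nonneg hY n
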